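/- arXiv:2104.13709 — 5 statements merged into one kernel-verified Lean document; each statement's English description precedes it below -/
import Mathlib

section
/- Let d ≥ 4 and η, g ≥ 0 be integers, and set m = (d-1)(d-2)/2 - η - g, assuming m > 0. Define R_m : Z → Z by R_m(k) = 0 for k ≤ 0, R_m(k) = ⌊(k+1)/2⌋ for 0 < k < 2m+1, and R_m(k) = k - m for k ≥ 2m+1. Then R_m(kd + 1 - η) ≤ (k+1)(k+2)/2 + g for all k ∈ {1,...,d-2} if and only if 2g + η ≥ (d²-6d+5)/4 when d is odd, and 2g + η ≥ (d²-6d+4)/4 when d is even. -/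
/-- The semigroup counting function `R_m` of the torus knot `T(2,2m+1)`. -/
def Rm (m k : ℤ) : ℤ :=
  if k ≤ 0 then 0 else if k < 2 * m + 1 then (k + 1) / 2 else k - m

/-!
For `m ≥ 0` one has `Rm m x = max 0 (max (x - m) ⌈x/2⌉)`, so the bound at `x = kd + 1 - η` splits
into three inequalities. With `m = (d-1)(d-2)/2 - η - g`, the one against `x - m` reads
`(d-k-1)(d-k-2) ≥ 0` and always holds; the one against `⌈x/2⌉` reads `k(d-3-k) ≤ 2g + η + 1`.
The largest value of `k(d-3-k)` over integers is `⌊(d-3)²/4⌋`, attained at `k = ⌈(d-3)/2⌉`,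
which lies in `{1, …, d-2}` as soon as `d ≥ 4`; in both parities `⌊(d-3)²/4⌋ - 1` is the
stated threshold.
-/

lemma Rm_le_iff {m x b : ℤ} (hm : 0 ≤ m) : Rm m x ≤ b ↔ 0 ≤ b ∧ x - m ≤ b ∧ x ≤ 2 * b := by
  unfold Rm
  split_ifs <;> omega

lemma mul_add_one_nonneg (n : ℤ) : 0 ≤ n * (n + 1) := by
  rcases le_or_gt n (-1) with hn | hn
  · exact mul_nonneg_of_nonpos_of_nonpos (by omega) (by omega)
  · exact mul_nonneg (by omega) (by omega)

lemma Rm_bound_at_iff {d η g m : ℤ} (k : ℤ) (hg : 0 ≤ g)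
    (hm : m = (d - 1) * (d - 2) / 2 - η - g) (hm0 : 0 ≤ m) :
    Rm m (k * d + 1 - η) ≤ (k + 1) * (k + 2) / 2 + g ↔ k * (d - 3 - k) ≤ 2 * g + η + 1 := by
  have hP : 2 * ((d - 1) * (d - 2) / 2) = (d - 1) * (d - 2) :=
    Int.two_mul_ediv_two_of_even (by convert Int.even_mul_succ_self (d - 2) using 1; ring)
  have hB : 2 * ((k + 1) * (k + 2) / 2) = (k + 1) * (k + 2) :=
    Int.two_mul_ediv_two_of_even (by convert Int.even_mul_succ_self (k + 1) using 1; ring)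
  have hB0 := mul_add_one_nonneg (k + 1)
  have hgap := mul_add_one_nonneg (d - k - 2)
  rw [Rm_le_iff hm0]
  constructor
  · rintro ⟨-, -, h⟩
    linarith
  · intro h
    exact ⟨by linarith, by linarith, by linarith⟩

lemma mul_sub_le_sq_ediv_four (n k : ℤ) : k * (n - k) ≤ n ^ 2 / 4 := by
  rw [Int.le_ediv_iff_mul_le (by norm_num)]
  nlinarith [sq_nonneg (n - 2 * k)]

lemma ediv_two_mul_sub_ediv_two (n : ℤ) : (n + 1) / 2 * (n - (n + 1) / 2) = n ^ 2 / 4 := by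
  obtain ⟨t, rfl | rfl⟩ := Int.even_or_odd' n
  · rw [show (2 * t + 1) / 2 = t by omega, show (2 * t) ^ 2 = 4 * (t * (2 * t - t)) by ring]
    omega
  · rw [show (2 * t + 1 + 1) / 2 = t + 1 by omega,
      show (2 * t + 1) ^ 2 = 4 * ((t + 1) * (2 * t + 1 - (t + 1))) + 1 by ring]
    omega

lemma forall_mul_sub_le_iff {n c : ℤ} (hn : 1 ≤ n) :
    (∀ k, 1 ≤ k → k ≤ n + 1 → k * (n - k) ≤ c) ↔ n ^ 2 / 4 ≤ c := by
  refine ⟨fun h => ?_, fun h k _ _ => (mul_sub_le_sq_ediv_four n k).trans h⟩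
  rw [← ediv_two_mul_sub_ediv_two]
  exact h _ (by omega) (by omega)

lemma odd_even_bounds_iff_sq_ediv_four (d s : ℤ) :
    ((Odd d → s ≥ (d ^ 2 - 6 * d + 5) / 4) ∧ (Even d → s ≥ (d ^ 2 - 6 * d + 4) / 4)) ↔
      (d - 3) ^ 2 / 4 ≤ s + 1 := by
  have h5 : (d - 3) ^ 2 / 4 = (d ^ 2 - 6 * d + 5) / 4 + 1 := by
    rw [show (d - 3) ^ 2 = d ^ 2 - 6 * d + 5 + 1 * 4 by ring, Int.add_mul_ediv_right _ _ (by norm_num)]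
  have h4 : Even d → (d ^ 2 - 6 * d + 4) / 4 = (d ^ 2 - 6 * d + 5) / 4 := by
    rintro ⟨t, rfl⟩
    rw [show (t + t) ^ 2 - 6 * (t + t) + 4 = (t ^ 2 - 3 * t + 1) * 4 by ring,
      show (t + t) ^ 2 - 6 * (t + t) + 5 = 1 + (t ^ 2 - 3 * t + 1) * 4 by ring]
    omega
  rw [h5]
  rcases Int.even_or_odd d with he | ho
  · simp [he, h4 he, Int.not_odd_iff_even.2 he]
  · simp [ho, Int.not_even_iff_odd.2 ho]

theorem Rm_bound_iff_general (d η g m : ℤ) (hd : 4 ≤ d) (hg : 0 ≤ g)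
    (hm : m = (d - 1) * (d - 2) / 2 - η - g) (hm0 : 0 < m) :
    (∀ k : ℤ, 1 ≤ k → k ≤ d - 2 →
        Rm m (k * d + 1 - η) ≤ (k + 1) * (k + 2) / 2 + g) ↔
      ((Odd d → 2 * g + η ≥ (d ^ 2 - 6 * d + 5) / 4) ∧
       (Even d → 2 * g + η ≥ (d ^ 2 - 6 * d + 4) / 4)) := by
  simp only [Rm_bound_at_iff _ hg hm hm0.le]
  rw [odd_even_bounds_iff_sq_ediv_four, ← forall_mul_sub_le_iff (by omega : 1 ≤ d - 3)]
  simp only [show d - 3 + 1 = d - 2 by ring]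

/-- For `d ≥ 4`, `η, g ≥ 0` and `m = (d-1)(d-2)/2 - η - g > 0`,
the inequality `R_m(kd+1-η) ≤ (k+1)(k+2)/2 + g` holds for all `k ∈ {1,…,d-2}`
iff `2g + η ≥ (d²-6d+5)/4` (d odd), resp. `2g + η ≥ (d²-6d+4)/4` (d even). -/
theorem Rm_bound_iff (d η g m : ℤ) (hd : 4 ≤ d) (hη : 0 ≤ η) (hg : 0 ≤ g)
    (hm : m = (d - 1) * (d - 2) / 2 - η - g) (hm0 : 0 < m) :
    (∀ k : ℤ, 1 ≤ k → k ≤ d - 2 →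
        Rm m (k * d + 1 - η) ≤ (k + 1) * (k + 2) / 2 + g) ↔
      ((Odd d → 2 * g + η ≥ (d ^ 2 - 6 * d + 5) / 4) ∧
       (Even d → 2 * g + η ≥ (d ^ 2 - 6 * d + 4) / 4)) :=
  Rm_bound_iff_general d η g m hd hg hm hm0
end

section
/- Let d ≥ 4, η, g ≥ 0, m = (d-1)(d-2)/2 - η - g > 0, and let R_m be as above. If 1 ≤ k ≤ d-2 and either kd + 1 - η ≥ 2m + 1 or kd + 1 - η ≤ 0, then R_m(kd + 1 - η) ≤ (k+1)(k+2)/2 + g. -/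
theorem Rm_of_nonpos {m k : ℤ} (hk : k ≤ 0) : Rm m k = 0 :=
  if_pos hk

theorem Rm_of_two_mul_add_one_le {m k : ℤ} (hk : 0 < k) (h : 2 * m + 1 ≤ k) :
    Rm m k = k - m := by
  rw [Rm, if_neg hk.not_ge, if_neg h.not_gt]

theorem Int.two_mul_mul_succ_ediv_two (n : ℤ) : 2 * (n * (n + 1) / 2) = n * (n + 1) :=
  Int.two_mul_ediv_two_of_even (Int.even_mul_succ_self n)

theorem Int.mul_succ_ediv_two_nonneg (n : ℤ) : 0 ≤ n * (n + 1) / 2 := by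
  refine Int.ediv_nonneg ?_ two_pos.le
  rcases le_or_gt 0 n with hn | hn
  · positivity
  · exact mul_nonneg_of_nonpos_of_nonpos hn.le (by omega)

theorem triangular_add_triangular_sub_mul (d k : ℤ) :
    (k + 1) * (k + 2) / 2 - k * d - 1 + (d - 1) * (d - 2) / 2 = (d - k - 1) * (d - k - 2) / 2 := by
  have hk := Int.two_mul_mul_succ_ediv_two (k + 1)
  have hd := Int.two_mul_mul_succ_ediv_two (d - 2)
  have hdk := Int.two_mul_mul_succ_ediv_two (d - k - 2)
  ring_nf at hk hd hdk ⊢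
  linarith

theorem Rm_bound_out_of_range_general (d η g m : ℤ)
    (hg : 0 ≤ g) (hm : m = (d - 1) * (d - 2) / 2 - η - g)
    (k : ℤ)
    (hout : 2 * m + 1 ≤ k * d + 1 - η ∨ k * d + 1 - η ≤ 0) :
    Rm m (k * d + 1 - η) ≤ (k + 1) * (k + 2) / 2 + g := by
  rcases le_or_gt (k * d + 1 - η) 0 with hx | hx
  · have hk : 0 ≤ (k + 1) * (k + 2) / 2 := by
      simpa only [add_assoc, one_add_one_eq_two] using Int.mul_succ_ediv_two_nonneg (k + 1)
    rw [Rm_of_nonpos hx]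
    omega
  · have hdk := Int.mul_succ_ediv_two_nonneg (d - k - 2)
    rw [show d - k - 2 + 1 = d - k - 1 by ring, mul_comm] at hdk
    rw [Rm_of_two_mul_add_one_le hx (hout.resolve_right hx.not_ge), hm]
    linarith [triangular_add_triangular_sub_mul d k]

/-- with `m = (d-1)(d-2)/2 - η - g > 0` and `1 ≤ k ≤ d-2`, if
`kd+1-η ≥ 2m+1` or `kd+1-η ≤ 0`, then `R_m(kd+1-η) ≤ (k+1)(k+2)/2 + g`. -/
theorem Rm_bound_out_of_range (d η g m : ℤ) (hd : 4 ≤ d) (hη : 0 ≤ η)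
    (hg : 0 ≤ g) (hm : m = (d - 1) * (d - 2) / 2 - η - g) (hm0 : 0 < m)
    (k : ℤ) (hk1 : 1 ≤ k) (hk2 : k ≤ d - 2)
    (hout : 2 * m + 1 ≤ k * d + 1 - η ∨ k * d + 1 - η ≤ 0) :
    Rm m (k * d + 1 - η) ≤ (k + 1) * (k + 2) / 2 + g :=
  Rm_bound_out_of_range_general d η g m hg hm k hout
end

section
/- Let n ≥ 2 and let S be the numerical semigroup generated by φ_{4n-2} and φ_{4n+2}, where φ denotes the Fibonacci sequence. Then S contains exactly 9 elements in the interval [0, 3φ_{4n}), namely 0, φ_{4n-2}, 2φ_{4n-2}, ..., 7φ_{4n-2}, and φ_{4n+2}. -/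
/-!
Write `p = φ_{4n-2}`, `q = φ_{4n+2}`, so that `p + q = 3φ_{4n}` and `7p < p + q < 8p`.
An element `a p + b q` below `p + q` has `b ≤ 1` since `q ≥ p`; if `b = 1` then `a = 0`,
and if `b = 0` then `a ≤ 7`. Finally `6p < q < 7p`, so `q` is not among the multiples of `p`.
-/

theorem fib_add_fib_add_four (m : ℕ) : Nat.fib m + Nat.fib (m + 4) = 3 * Nat.fib (m + 2) := by
  have h2 : Nat.fib (m + 2) = Nat.fib m + Nat.fib (m + 1) := Nat.fib_add_two
  have h3 : Nat.fib (m + 3) = Nat.fib (m + 1) + Nat.fib (m + 2) := Nat.fib_add_two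
  have h4 : Nat.fib (m + 4) = Nat.fib (m + 2) + Nat.fib (m + 3) := Nat.fib_add_two
  omega

theorem seven_mul_fib_lt (m : ℕ) (hm : 2 ≤ m) : 7 * Nat.fib m < 3 * Nat.fib (m + 2) := by
  obtain ⟨k, rfl⟩ : ∃ k, m = k + 2 := ⟨m - 2, by omega⟩
  show 7 * Nat.fib (k + 2) < 3 * Nat.fib (k + 4)
  have h1 : 0 < Nat.fib (k + 1) := Nat.fib_pos.2 k.succ_pos
  have h2 : Nat.fib (k + 2) = Nat.fib k + Nat.fib (k + 1) := Nat.fib_add_two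
  have h3 : Nat.fib (k + 3) = Nat.fib (k + 1) + Nat.fib (k + 2) := Nat.fib_add_two
  have h4 : Nat.fib (k + 4) = Nat.fib (k + 2) + Nat.fib (k + 3) := Nat.fib_add_two
  have hmono : Nat.fib k ≤ Nat.fib (k + 1) := Nat.fib_le_fib_succ
  omega

theorem three_mul_fib_add_two_lt (m : ℕ) (hm : 5 ≤ m) : 3 * Nat.fib (m + 2) < 8 * Nat.fib m := by
  obtain ⟨k, rfl⟩ : ∃ k, m = k + 5 := ⟨m - 5, by omega⟩
  show 3 * Nat.fib (k + 7) < 8 * Nat.fib (k + 5)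
  have hlt : Nat.fib (k + 2) < Nat.fib (k + 3) := Nat.fib_lt_fib_succ (by omega)
  have h4 : Nat.fib (k + 4) = Nat.fib (k + 2) + Nat.fib (k + 3) := Nat.fib_add_two
  have h5 : Nat.fib (k + 5) = Nat.fib (k + 3) + Nat.fib (k + 4) := Nat.fib_add_two
  have h6 : Nat.fib (k + 6) = Nat.fib (k + 4) + Nat.fib (k + 5) := Nat.fib_add_two
  have h7 : Nat.fib (k + 7) = Nat.fib (k + 5) + Nat.fib (k + 6) := Nat.fib_add_two
  omega

section TwoGenerators

variable {p q k : ℕ} (hk : k * p < p + q) (hk' : p + q < (k + 1) * p)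
include hk hk'

theorem pos_of_mul_lt_add_of_add_lt_succ_mul : 0 < p :=
  Nat.pos_of_ne_zero (by rintro rfl; simp at hk')

theorem setOf_mul_add_mul_lt_add_eq (hpq : p ≤ q) :
    {x : ℕ | (∃ a b : ℕ, x = a * p + b * q) ∧ x < p + q}
      = (fun j => j * p) '' {j : ℕ | j ≤ k} ∪ {q} := by
  have hp := pos_of_mul_lt_add_of_add_lt_succ_mul hk hk'
  ext x
  simp only [Set.mem_ofPred_eq, Set.mem_union, Set.mem_image, Set.mem_singleton_iff]
  constructor
  · rintro ⟨⟨a, b, rfl⟩, hx⟩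
    match b with
    | 0 =>
      refine Or.inl ⟨a, ?_, by ring⟩
      by_contra! h
      have : (k + 1) * p ≤ a * p := Nat.mul_le_mul_right p h
      omega
    | 1 =>
      obtain rfl : a = 0 := by
        by_contra h
        have : 1 * p ≤ a * p := Nat.mul_le_mul_right p (by omega)
        omega
      simp
    | b + 2 =>
      have : 2 * q ≤ (b + 2) * q := Nat.mul_le_mul_right q (by omega)
      omega
  · rintro (⟨j, hj, rfl⟩ | rfl)
    · have : j * p ≤ k * p := Nat.mul_le_mul_right p hj
      exact ⟨⟨j, 0, by ring⟩, by omega⟩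
    · exact ⟨⟨0, 1, by ring⟩, by omega⟩

theorem ncard_image_mul_union_singleton :
    ((fun j => j * p) '' {j : ℕ | j ≤ k} ∪ {q}).ncard = k + 2 := by
  have hp := pos_of_mul_lt_add_of_add_lt_succ_mul hk hk'
  have hq : q ∉ (fun j => j * p) '' {j : ℕ | j ≤ k} := by
    rintro ⟨j, -, rfl⟩
    have hkj : k < j + 1 := Nat.lt_of_mul_lt_mul_right (by rwa [add_one_mul, add_comm])
    have hjk : j + 1 < k + 1 := Nat.lt_of_mul_lt_mul_right (by rwa [add_one_mul, add_comm])
    omega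
  rw [Set.union_singleton, Set.ncard_insert_of_notMem hq,
    Set.ncard_image_of_injective _ (mul_left_injective₀ hp.ne')]
  exact congrArg (· + 1) (Set.ncard_Iic_nat k)

end TwoGenerators

/-- for `n ≥ 2`, the numerical semigroup generated by `φ_{4n-2}`
and `φ_{4n+2}` has exactly 9 elements in `[0, 3φ_{4n})`, namely
`0, φ_{4n-2}, 2φ_{4n-2}, …, 7φ_{4n-2}` and `φ_{4n+2}`. -/
theorem fibonacci_semigroup_count (n : ℕ) (hn : 2 ≤ n) :
    {x : ℕ | (∃ a b : ℕ, x = a * Nat.fib (4 * n - 2) + b * Nat.fib (4 * n + 2)) ∧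
        x < 3 * Nat.fib (4 * n)}
      = (fun j => j * Nat.fib (4 * n - 2)) '' {j : ℕ | j ≤ 7} ∪ {Nat.fib (4 * n + 2)} ∧
    Set.ncard {x : ℕ |
        (∃ a b : ℕ, x = a * Nat.fib (4 * n - 2) + b * Nat.fib (4 * n + 2)) ∧
        x < 3 * Nat.fib (4 * n)} = 9 := by
  set m := 4 * n - 2
  rw [show 4 * n + 2 = m + 4 by omega, show 4 * n = m + 2 by omega, ← fib_add_fib_add_four m]
  have hlow : 7 * Nat.fib m < Nat.fib m + Nat.fib (m + 4) :=
    fib_add_fib_add_four m ▸ seven_mul_fib_lt m (by omega)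
  have hhigh : Nat.fib m + Nat.fib (m + 4) < 8 * Nat.fib m :=
    fib_add_fib_add_four m ▸ three_mul_fib_add_two_lt m (by omega)
  have hset := setOf_mul_add_mul_lt_add_eq hlow hhigh (Nat.fib_mono (by omega))
  exact ⟨hset, hset ▸ ncard_image_mul_union_singleton hlow hhigh⟩
end

section
/- Let C = (C_1 → C_0) be a positive staircase complex over R = F_2[U,V] with generators x_0,...,x_{2n} of C_0 and y_1,...,y_{2n-1} of C_1 and differential ∂y_{2i+1} = U^{a_i}x_{2i} + V^{b_i}x_{2i+2} (a_i, b_i > 0). Then the homology H = C_0 / im(∂) is torsion-free as an R-module: if f ∈ R is a non-zero monomial and f·[x] = 0 in H, then [x] = 0 in H. -/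
open MvPolynomial

/-!
Homology is torsion-free once `U` and `V` act injectively on it, since `U^i V^j`
is then a product of injective maps. If `U • x = ∂ f`, read this at the coordinate
`x_{2i+2}`: apart from `f_i V^{b_i}`, every contribution to it carries a positive
power of `U`, so the prime `U` divides `f_i V^{b_i}`, hence `f_i`. Thus `f = U g`
and, `R` being a domain, `x = ∂ g`. For `V` read at `x_{2i}` instead.
-/

/-- The ground ring `𝔽₂[U,V]` of link Floer theory, with `U = X 0`, `V = X 1`. -/
noncomputable abbrev R2 := MvPolynomial (Fin 2) (ZMod 2)

/-- The differential of a positive staircase complex: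
`∂ y_{2i+1} = U^{a i} x_{2i} + V^{b i} x_{2i+2}`. -/
noncomputable def stairDiff (n : ℕ) (a b : Fin n → ℕ) :
    (Fin n → R2) → (Fin (n + 1) → R2) := fun f =>
  ∑ i : Fin n, f i •
    ((Pi.single i.castSucc (X 0 ^ a i) + Pi.single i.succ (X 1 ^ b i) :
      Fin (n + 1) → R2))

section DivisibilityReflection

variable {R ι κ : Type*} [CommRing R]

theorem dvd_of_dvd_linearCombination_single_add_single [Fintype ι] [DecidableEq κ] {p : R}
    (hp : Prime p) {e₁ e₂ : ι → κ} (he₂ : Function.Injective e₂) {u v : ι → R} (hu : ∀ i, p ∣ u i)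
    (hv : ∀ i, ¬ p ∣ v i) {w : ι → κ → R}
    (hw : ∀ i, w i = Pi.single (e₁ i) (u i) + Pi.single (e₂ i) (v i)) (f : ι → R)
    (hf : ∀ k, p ∣ Fintype.linearCombination R w f k) (i : ι) : p ∣ f i := by
  have hcoord : Fintype.linearCombination R w f (e₂ i) =
      (∑ j, f j * (Pi.single (e₁ j) (u j) : κ → R) (e₂ i)) + f i * v i := by
    simp only [Fintype.linearCombination_apply, hw, Finset.sum_apply, Pi.smul_apply,
      Pi.add_apply, smul_eq_mul, mul_add, Finset.sum_add_distrib, Pi.single_apply,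
      mul_ite, mul_zero]
    rw [Fintype.sum_eq_single i fun j hj => if_neg (he₂.ne (Ne.symm hj)), if_pos rfl]
  have hfirst : p ∣ ∑ j, f j * (Pi.single (e₁ j) (u j) : κ → R) (e₂ i) := by
    refine Finset.dvd_sum fun j _ => dvd_mul_of_dvd_right ?_ _
    rw [Pi.single_apply]
    split_ifs
    exacts [hu j, dvd_zero p]
  have hfv : p ∣ f i * v i := (dvd_add_right hfirst).1 (hcoord ▸ hf (e₂ i))
  exact (hp.dvd_or_dvd hfv).resolve_right (hv i)

theorem isSMulRegular_quotient_range_of_dvd [IsDomain R] {D : (ι → R) →ₗ[R] (κ → R)} {c : R}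
    (hc : c ≠ 0) (hD : ∀ f, (∀ k, c ∣ D f k) → ∀ i, c ∣ f i) :
    IsSMulRegular ((κ → R) ⧸ LinearMap.range D) c := by
  refine (isSMulRegular_quotient_iff_mem_of_smul_mem _ c).2 fun x ⟨f, hf⟩ => ?_
  choose g hg using hD f fun k => hf ▸ dvd_mul_right c (x k)
  refine ⟨g, smul_right_injective _ hc ?_⟩
  change c • D g = c • x
  rw [← map_smul, ← hf]
  exact congrArg D (funext fun i => (hg i).symm)

end DivisibilityReflection

theorem MvPolynomial.X_not_dvd_X_pow {σ R : Type*} [CommRing R] [IsDomain R] {i j : σ} (hij : i ≠ j)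
    (m : ℕ) : ¬ (X i : MvPolynomial σ R) ∣ X j ^ m :=
  fun h => hij <| (X_dvd_X (R := R)).1 <| (X_prime (R := R) (σ := σ)).dvd_of_dvd_pow h

noncomputable def stairDiffLinearMap (n : ℕ) (a b : Fin n → ℕ) :
    (Fin n → R2) →ₗ[R2] (Fin (n + 1) → R2) :=
  Fintype.linearCombination R2 fun i =>
    Pi.single i.castSucc (X 0 ^ a i) + Pi.single i.succ (X 1 ^ b i)

theorem coe_stairDiffLinearMap (n : ℕ) (a b : Fin n → ℕ) :
    ⇑(stairDiffLinearMap n a b) = stairDiff n a b :=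
  rfl

theorem isSMulRegular_X_zero_stairDiff (n : ℕ) (a b : Fin n → ℕ) (ha : ∀ i, 0 < a i) :
    IsSMulRegular ((Fin (n + 1) → R2) ⧸ LinearMap.range (stairDiffLinearMap n a b))
      (X 0 : R2) :=
  isSMulRegular_quotient_range_of_dvd (X_ne_zero 0) <|
    dvd_of_dvd_linearCombination_single_add_single X_prime (Fin.succ_injective n)
      (fun i => dvd_pow_self _ (ha i).ne') (fun i => X_not_dvd_X_pow (by decide) (b i))
      fun _ => rfl

theorem isSMulRegular_X_one_stairDiff (n : ℕ) (a b : Fin n → ℕ) (hb : ∀ i, 0 < b i) :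
    IsSMulRegular ((Fin (n + 1) → R2) ⧸ LinearMap.range (stairDiffLinearMap n a b))
      (X 1 : R2) :=
  isSMulRegular_quotient_range_of_dvd (X_ne_zero 1) <|
    dvd_of_dvd_linearCombination_single_add_single X_prime (Fin.castSucc_injective n)
      (fun i => dvd_pow_self _ (hb i).ne') (fun i => X_not_dvd_X_pow (by decide) (a i))
      fun _ => add_comm _ _

/-- the homology `H = C₀ / im ∂` of a positive staircase complex
is torsion-free: if a non-zero monomial `U^i V^j` multiplies a class `[x]` to
zero in `H` (i.e. `U^i V^j • x ∈ im ∂`), then `[x] = 0` (i.e. `x ∈ im ∂`). -/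
theorem staircase_homology_torsionFree (n : ℕ) (a b : Fin n → ℕ)
    (ha : ∀ i, 0 < a i) (hb : ∀ i, 0 < b i)
    (x : Fin (n + 1) → R2) (i j : ℕ)
    (hx : (X 0 ^ i * X 1 ^ j : R2) • x ∈ Set.range (stairDiff n a b)) :
    x ∈ Set.range (stairDiff n a b) := by
  rw [← coe_stairDiffLinearMap, ← LinearMap.coe_range, SetLike.mem_coe] at hx ⊢
  exact mem_of_isSMulRegular_quotient_of_smul_mem
    (((isSMulRegular_X_zero_stairDiff n a b ha).pow i).mul
      ((isSMulRegular_X_one_stairDiff n a b hb).pow j)) hx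
end

section
/- Let C = (C_1 → C_0) and D = (D_1 → D_0) be positive staircase complexes over R = F_2[U,V]. Then their tensor product E = C ⊗_R D, with filtration levels E_2 = C_1⊗D_1, E_1 = (C_1⊗D_0) ⊕ (C_0⊗D_1), E_0 = C_0⊗D_0, is exact: the sequence 0 → E_2 → E_1 → E_0 is exact, i.e., the map E_2 → E_1 is injective and ker(E_1 → E_0) = im(E_2 → E_1). -/
open MvPolynomial

/-- The map `E₂ = C₁ ⊗ D₁ → E₁ = (C₁ ⊗ D₀) ⊕ (C₀ ⊗ D₁)` of the tensor product
of two staircase complexes `C = (C₁ → C₀)`, `D = (D₁ → D₀)` (over `𝔽₂`, so no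
signs), where free modules are identified with function spaces on products of
basis index sets. -/
noncomputable def tensorD2 (n m : ℕ) (a b : Fin n → ℕ) (c d : Fin m → ℕ) :
    (Fin n × Fin m → R2) →
      ((Fin n × Fin (m + 1) → R2) × (Fin (n + 1) × Fin m → R2)) := fun g =>
  (fun p => stairDiff m c d (fun j => g (p.1, j)) p.2,
   fun p => stairDiff n a b (fun i => g (i, p.2)) p.1)

/-- The map `E₁ = (C₁ ⊗ D₀) ⊕ (C₀ ⊗ D₁) → E₀ = C₀ ⊗ D₀`. -/
noncomputable def tensorD1 (n m : ℕ) (a b : Fin n → ℕ) (c d : Fin m → ℕ) :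
    ((Fin n × Fin (m + 1) → R2) × (Fin (n + 1) × Fin m → R2)) →
      (Fin (n + 1) × Fin (m + 1) → R2) := fun h p =>
  stairDiff n a b (fun i => h.1 (i, p.2)) p.1 +
    stairDiff m c d (fun j => h.2 (p.1, j)) p.2

/-!
A staircase differential is injective: its matrix is triangular with diagonal entries `U ^ a i`.
Hence `E₂ → E₁`, whose second component is `∂_C ⊗ 1`, is injective, and the composite vanishes
because `∂_C ⊗ 1` and `1 ⊗ ∂_D` commute and we are in characteristic two. A cycle `(h₁, h₂)` of
`E₁` satisfies `(∂_C ⊗ 1) h₁ = (1 ⊗ ∂_D) h₂`, so every row of `(∂_C ⊗ 1) h₁` is a boundary of `D`.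
Since `c j > 0` and `U ∤ V`, multiplication by `U` is injective on `coker ∂_D`, and the triangular
shape of `∂_C` then makes every row `h₁ i` a boundary `∂_D (w i)`. The matrix `w` is the preimage:
its second component agrees with `h₂` after applying the injective `1 ⊗ ∂_D`.
-/

section Staircase

variable {n : ℕ} {a b : Fin n → ℕ}

noncomputable def stairDiffₗ (n : ℕ) (a b : Fin n → ℕ) :
    (Fin n → R2) →ₗ[R2] (Fin (n + 1) → R2) :=
  Fintype.linearCombination R2 fun i =>
    Pi.single i.castSucc (X 0 ^ a i) + Pi.single i.succ (X 1 ^ b i)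

theorem coe_stairDiffₗ : ⇑(stairDiffₗ n a b) = stairDiff n a b :=
  funext fun f => Fintype.linearCombination_apply R2 _ f

theorem stairDiff_apply_castSucc (f : Fin n → R2) (i : Fin n) :
    stairDiff n a b f i.castSucc =
      X 0 ^ a i * f i + ∑ j : Fin n, if i.castSucc = j.succ then X 1 ^ b j * f j else 0 := by
  simp [stairDiff, Finset.sum_apply, Pi.single_apply, Finset.sum_add_distrib, mul_comm]

theorem stairDiff_apply_succ (f : Fin n → R2) (i : Fin n) :
    stairDiff n a b f i.succ =
      (∑ j : Fin n, if i.succ = j.castSucc then X 0 ^ a j * f j else 0) + X 1 ^ b i * f i := by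
  simp [stairDiff, Finset.sum_apply, Pi.single_apply, Finset.sum_add_distrib, mul_comm]

/-- Induction along the staircase: row `castSucc i` is `U ^ a i • x i` plus multiples of the
earlier `x j`. -/
theorem mem_of_stairDiff_castSucc_mem {κ : Type*} {S : Submodule R2 (κ → R2)}
    (hS : IsSMulRegular ((κ → R2) ⧸ S) (X 0 : R2)) (x : Fin n → κ → R2)
    (hx : ∀ i : Fin n, (fun q => stairDiff n a b (fun j => x j q) i.castSucc) ∈ S) (i : Fin n) :
    x i ∈ S := by
  induction i using WellFoundedLT.induction with
  | ind i ih =>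
    have hrow : (fun q => stairDiff n a b (fun j => x j q) i.castSucc) =
        (X 0 : R2) ^ a i • x i +
          ∑ j : Fin n, if i.castSucc = j.succ then (X 1 : R2) ^ b j • x j else 0 := by
      funext q
      simp [stairDiff_apply_castSucc, Finset.sum_apply, ite_apply]
    have hlower :
        (∑ j : Fin n, if i.castSucc = j.succ then (X 1 : R2) ^ b j • x j else 0) ∈ S := by
      refine S.sum_mem fun j _ => ?_
      split_ifs with hij
      · refine S.smul_mem _ (ih j ?_)
        rw [← Fin.succ_le_castSucc_iff, hij]
      · exact S.zero_mem
    have hxi := hx i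
    rw [hrow, S.add_mem_iff_left hlower] at hxi
    exact mem_of_isSMulRegular_quotient_of_smul_mem (hS.pow (a i)) hxi

theorem stairDiff_injective : Function.Injective (stairDiff n a b) := by
  rw [← coe_stairDiffₗ, injective_iff_map_eq_zero]
  intro f hf
  have hS : IsSMulRegular ((Unit → R2) ⧸ (⊥ : Submodule R2 (Unit → R2))) (X 0 : R2) := by
    rw [isSMulRegular_quotient_iff_mem_of_smul_mem]
    simp
  funext i
  show f i = 0
  have hx : ∀ i : Fin n, (fun _ : Unit => stairDiff n a b f i.castSucc) ∈ (⊥ : Submodule R2 _) :=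
    fun i => by rw [Submodule.mem_bot, ← coe_stairDiffₗ, hf]; rfl
  simpa using congrFun (mem_of_stairDiff_castSucc_mem hS (fun j _ => f j) hx i) ()

/-- If `∂ w = U • z`, coordinate `succ i` gives `U ∣ V ^ b i * w i`, so `U ∣ w` and
`∂ (w / U) = z`. -/
theorem isSMulRegular_quotient_range_stairDiffₗ (ha : ∀ i, 0 < a i) :
    IsSMulRegular ((Fin (n + 1) → R2) ⧸ LinearMap.range (stairDiffₗ n a b)) (X 0 : R2) := by
  rw [isSMulRegular_quotient_iff_mem_of_smul_mem]
  rintro z ⟨w, hw⟩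
  have hdvd : ∀ i, (X 0 : R2) ∣ w i := by
    intro i
    have hsucc : stairDiff n a b w i.succ = X 0 * z i.succ := by
      rw [← coe_stairDiffₗ, hw]; rfl
    rw [stairDiff_apply_succ] at hsucc
    have hlower : (X 0 : R2) ∣ ∑ j : Fin n, if i.succ = j.castSucc then X 0 ^ a j * w j else 0 :=
      Finset.dvd_sum fun j _ => by
        split_ifs
        · exact (dvd_pow_self _ (ha j).ne').mul_right _
        · exact dvd_zero _
    have hV : (X 0 : R2) ∣ X 1 ^ b i * w i :=
      (dvd_add_right hlower).mp (hsucc ▸ dvd_mul_right _ _)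
    have hprime : Prime (X 0 : R2) := X_prime
    refine (hprime.dvd_or_dvd hV).resolve_left fun hU => ?_
    exact absurd ((X_dvd_X (R := ZMod 2)).mp (hprime.dvd_of_dvd_pow hU) : (0 : Fin 2) = 1)
      (by decide)
  choose w' hw' using hdvd
  refine ⟨w', smul_right_injective _ (X_ne_zero 0 : (X 0 : R2) ≠ 0) ?_⟩
  have hw'' : (X 0 : R2) • w' = w := funext fun i => (hw' i).symm
  show (X 0 : R2) • stairDiffₗ n a b w' = X 0 • z
  rw [← map_smul, hw'', hw]

theorem stairDiff_comm {m : ℕ} {c d : Fin m → ℕ} (g : Fin n → Fin m → R2)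
    (p : Fin (n + 1)) (q : Fin (m + 1)) :
    stairDiff n a b (fun i => stairDiff m c d (g i) q) p =
      stairDiff m c d (fun j => stairDiff n a b (fun i => g i j) p) q := by
  simp only [stairDiff, Finset.sum_apply, Pi.smul_apply, Pi.add_apply, smul_eq_mul,
    Finset.sum_mul]
  rw [Finset.sum_comm]
  exact Finset.sum_congr rfl fun j _ => Finset.sum_congr rfl fun i _ => by ring

end Staircase

section Tensor

variable {n m : ℕ} {a b : Fin n → ℕ} {c d : Fin m → ℕ}

theorem tensorD2_injective : Function.Injective (tensorD2 n m a b c d) := by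
  intro g g' h
  have hcols : ∀ p j,
      stairDiff n a b (fun i => g (i, j)) p = stairDiff n a b (fun i => g' (i, j)) p :=
    fun p j => congrFun (congrArg Prod.snd h) (p, j)
  funext ⟨i, j⟩
  exact congrFun (stairDiff_injective (funext fun p => hcols p j)) i

theorem tensorD1_tensorD2 (g : Fin n × Fin m → R2) :
    tensorD1 n m a b c d (tensorD2 n m a b c d g) = 0 := by
  funext ⟨p, q⟩
  simp only [tensorD1, tensorD2, Pi.zero_apply]
  rw [stairDiff_comm (fun i j => g (i, j))]
  exact CharTwo.add_self_eq_zero _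

theorem mem_range_tensorD2_of_tensorD1_eq_zero (hc : ∀ j, 0 < c j)
    {h : (Fin n × Fin (m + 1) → R2) × (Fin (n + 1) × Fin m → R2)}
    (hh : tensorD1 n m a b c d h = 0) : h ∈ Set.range (tensorD2 n m a b c d) := by
  have hcycle : ∀ p q, stairDiff n a b (fun i => h.1 (i, q)) p =
      stairDiff m c d (fun j => h.2 (p, j)) q :=
    fun p q => CharTwo.add_eq_zero.mp (congrFun hh (p, q))
  have hrows : ∀ i, (fun q => h.1 (i, q)) ∈ LinearMap.range (stairDiffₗ m c d) :=
    mem_of_stairDiff_castSucc_mem (a := a) (b := b)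
      (isSMulRegular_quotient_range_stairDiffₗ hc) _ fun i =>
        ⟨fun j => h.2 (i.castSucc, j), by
          rw [coe_stairDiffₗ]; exact funext fun q => (hcycle _ q).symm⟩
  choose w hw using hrows
  rw [coe_stairDiffₗ] at hw
  refine ⟨fun ij => w ij.1 ij.2, Prod.ext ?_ ?_⟩
  · funext ⟨i, q⟩
    exact congrFun (hw i) q
  · funext ⟨p, j⟩
    have hcol : stairDiff m c d (fun j => stairDiff n a b (fun i => w i j) p) =
        stairDiff m c d (fun j => h.2 (p, j)) := by
      funext q
      simp only [← stairDiff_comm, hw, hcycle]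
    exact congrFun (stairDiff_injective hcol) j

end Tensor

theorem tensor_staircase_exact_general (n m : ℕ) (a b : Fin n → ℕ) (c d : Fin m → ℕ)
    (hc : ∀ j, 0 < c j) :
    Function.Injective (tensorD2 n m a b c d) ∧
    (∀ g, tensorD1 n m a b c d (tensorD2 n m a b c d g) = 0) ∧
    (∀ h, tensorD1 n m a b c d h = 0 → h ∈ Set.range (tensorD2 n m a b c d)) :=
  ⟨tensorD2_injective, tensorD1_tensorD2, fun _ => mem_range_tensorD2_of_tensorD1_eq_zero hc⟩

/-- the tensor product of two positive staircase complexes is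
exact: `0 → E₂ → E₁ → E₀` is exact, i.e. `E₂ → E₁` is injective, the
composite `E₂ → E₁ → E₀` vanishes, and `ker(E₁ → E₀) = im(E₂ → E₁)`. -/
theorem tensor_staircase_exact (n m : ℕ) (a b : Fin n → ℕ) (c d : Fin m → ℕ)
    (ha : ∀ i, 0 < a i) (hb : ∀ i, 0 < b i)
    (hc : ∀ j, 0 < c j) (hd : ∀ j, 0 < d j) :
    Function.Injective (tensorD2 n m a b c d) ∧
    (∀ g, tensorD1 n m a b c d (tensorD2 n m a b c d g) = 0) ∧
    (∀ h, tensorD1 n m a b c d h = 0 → h ∈ Set.range (tensorD2 n m a b c d)) :=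
  tensor_staircase_exact_general n m a b c d hc
end
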